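/- The infinite word f^ω(0) is undirected (7/4)⁺-free: no factor of f^ω(0) is an undirected r-power with rational r > 7/4. Equivalently, f^ω(0) has no factor of the form x·y·x′ with x nonempty, x′ ∈ {x, reversal of x}, and |x| > 3|y|. -/

import Mathlib

/-- `x` is a (finite, contiguous) factor of the infinite word `w`. -/
def InfFactor {A : Type*} (x : List A) (w : ℕ → A) : Prop :=
  ∃ i : ℕ, x = (List.range x.length).map fun j => w (i + j)

/-- `z` is an undirected `r`-power: `z = x ++ y ++ x'` with `x` nonempty,
`x' = x` or `x' = x.reverse`, and `|x y x'| / |x y| = r`. -/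
def IsUndirectedPow {A : Type*} (r : ℚ) (z : List A) : Prop :=
  ∃ x y x' : List A, z = x ++ y ++ x' ∧ x ≠ [] ∧ (x' = x ∨ x' = x.reverse) ∧
    (z.length : ℚ) = r * ((x.length : ℚ) + (y.length : ℚ))

/-- `z` is an ordinary `r`-power: `z = x ++ y ++ x` with `x` nonempty and `|x y x| / |x y| = r`. -/
def IsOrdinaryPow {A : Type*} (r : ℚ) (z : List A) : Prop :=
  ∃ x y : List A, z = x ++ y ++ x ∧ x ≠ [] ∧
    (z.length : ℚ) = r * ((x.length : ℚ) + (y.length : ℚ))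

/-- The infinite word `w` is undirected `α`-free: no factor of `w` is an undirected
`r`-power with rational `r ≥ α` (where `1 < r ≤ 2`). -/
def UndirectedFree {A : Type*} (α : ℝ) (w : ℕ → A) : Prop :=
  ∀ z : List A, InfFactor z w →
    ∀ r : ℚ, 1 < r → r ≤ 2 → α ≤ (r : ℝ) → ¬ IsUndirectedPow r z

/-- The infinite word `w` is undirected `α⁺`-free: no factor of `w` is an undirected
`r`-power with rational `r > α` (where `1 < r ≤ 2`). -/
def UndirectedPlusFree {A : Type*} (α : ℝ) (w : ℕ → A) : Prop :=
  ∀ z : List A, InfFactor z w →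
    ∀ r : ℚ, 1 < r → r ≤ 2 → α < (r : ℝ) → ¬ IsUndirectedPow r z

/-- The infinite word `w` is (ordinary) `α`-free. -/
def OrdinaryFree {A : Type*} (α : ℝ) (w : ℕ → A) : Prop :=
  ∀ z : List A, InfFactor z w →
    ∀ r : ℚ, 1 < r → r ≤ 2 → α ≤ (r : ℝ) → ¬ IsOrdinaryPow r z

/-- The infinite word `w` is (ordinary) `α⁺`-free. -/
def OrdinaryPlusFree {A : Type*} (α : ℝ) (w : ℕ → A) : Prop :=
  ∀ z : List A, InfFactor z w →
    ∀ r : ℚ, 1 < r → r ≤ 2 → α < (r : ℝ) → ¬ IsOrdinaryPow r z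

/-- The undirected repetition threshold for `k` letters: the infimum of the set of
rationals `r ∈ (1, 2]` such that undirected `r`-powers are `k`-avoidable. -/
noncomputable def URT (k : ℕ) : ℝ :=
  sInf {a : ℝ | ∃ r : ℚ, a = (r : ℝ) ∧ 1 < r ∧ r ≤ 2 ∧
    ∃ w : ℕ → Fin k, UndirectedFree (r : ℝ) w}

/-- The (ordinary) repetition threshold for `k` letters. -/
noncomputable def RT (k : ℕ) : ℝ :=
  sInf {a : ℝ | ∃ r : ℚ, a = (r : ℝ) ∧ 1 < r ∧ r ≤ 2 ∧
    ∃ w : ℕ → Fin k, OrdinaryFree (r : ℝ) w}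

/-- The 24-uniform morphism `f` on `{0,1,2}`:
`f(0) = 012021201021012102120210`, `f(1) = 120102012102120210201021`,
`f(2) = 201210120210201021012102`. -/
def fMorph : Fin 3 → List (Fin 3)
  | 0 => [0,1,2,0,2,1,2,0,1,0,2,1,0,1,2,1,0,2,1,2,0,2,1,0]
  | 1 => [1,2,0,1,0,2,0,1,2,1,0,2,1,2,0,2,1,0,2,0,1,0,2,1]
  | 2 => [2,0,1,2,1,0,1,2,0,2,1,0,2,0,1,0,2,1,0,1,2,1,0,2]

/-- The infinite fixed point `f^ω(0)` of `fMorph` starting with `0`: its letter at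
position `n` is the `(n mod 24)`-th letter of the image under `f` of its letter at
position `n / 24` (its prefix of length `24^n` is `f^n(0)` for every `n`). -/
def fOmega : ℕ → Fin 3
  | 0 => 0
  | n + 1 => (fMorph (fOmega ((n + 1) / 24))).getD ((n + 1) % 24) 0
  decreasing_by exact Nat.div_lt_self (Nat.succ_pos n) (by norm_num)

/-!
A factor `x y x` or `x y xᴿ` of `f^ω(0)` with `|x| > 3|y|` is a run of length `p = |x|` with
period `P = |x y|` and `3P < 4p`, or a mirror run of length `p` around a centre of length
`q < p / 3`. Every factor of length `16` of `f^ω(0)` determines its position modulo `24`, and `f`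
is injective at each position of its images; so a periodic run of length at least `16` has period
divisible by `24` and desubstitutes to a periodic run of period `P / 24` and length at least
`p / 24`, and induction on the period applies. No factor of length `19` has its reversal as a
factor, which rules out mirror runs of length at least `19`. The remaining short runs lie inside
`f(abc)` for a factor `abc`, and are excluded by a finite check.
-/

section Runs

variable {α β : Type*}

def IsPeriodicRun (w : ℕ → α) (i p P : ℕ) : Prop :=
  ∀ t < p, w (i + t) = w (i + t + P)

/-- `w` has the factor `x y xᴿ` at position `i`, with `|x| = p` and `|y| = q`. -/
def IsMirrorRun (w : ℕ → α) (i p q : ℕ) : Prop :=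
  ∀ t < p, w (i + t) = w (i + 2 * p + q - 1 - t)

-- Decided through `List.range`, which kernel reduction evaluates much faster than the instance
-- for bounded quantifiers.
instance [DecidableEq α] (w : ℕ → α) (i p P : ℕ) : Decidable (IsPeriodicRun w i p P) :=
  decidable_of_iff (∀ t ∈ List.range p, w (i + t) = w (i + t + P)) (by simp [IsPeriodicRun])

instance [DecidableEq α] (w : ℕ → α) (i p q : ℕ) : Decidable (IsMirrorRun w i p q) :=
  decidable_of_iff (∀ t ∈ List.range p, w (i + t) = w (i + 2 * p + q - 1 - t))
    (by simp [IsMirrorRun])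

variable {w : ℕ → α} {i p q P : ℕ}

namespace IsPeriodicRun

theorem mono (h : IsPeriodicRun w i p P) {p' : ℕ} (hp : p' ≤ p) : IsPeriodicRun w i p' P :=
  fun t ht => h t (by omega)

theorem map {w' : ℕ → β} {i' : ℕ} (g : α → β)
    (hw : ∀ j < p + P, g (w (i + j)) = w' (i' + j)) (h : IsPeriodicRun w i p P) :
    IsPeriodicRun w' i' p P := by
  intro t ht
  rw [← hw t (by omega), h t ht, add_assoc, add_assoc, hw (t + P) (by omega)]

/-- Desubstitution for a word built like the fixed point of a `k`-uniform morphism, with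
synchronizing factors of length `L`. -/
theorem desubstitute {k L : ℕ} (hk : 0 < k)
    (hsync : ∀ n n', (∀ j < L, w (n + j) = w (n' + j)) → n ≡ n' [MOD k])
    (hblock : ∀ m m' j, j < k → w (k * m + j) = w (k * m' + j) → w m = w m')
    (h : IsPeriodicRun w i p P) (hL : L ≤ p) (hp : 0 < p) :
    k ∣ P ∧ ∃ i' p', p ≤ k * p' ∧ IsPeriodicRun w i' p' (P / k) := by
  have hi := Nat.mul_div_le i k
  have hi' : i < k * (i / k) + k := by simpa [mul_add] using Nat.lt_mul_div_succ i hk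
  have hdvd : k ∣ P := by
    have := hsync i (i + P) fun j hj => by rw [h j (by omega), add_right_comm]
    exact Nat.modEq_zero_iff_dvd.1 (Nat.ModEq.add_left_cancel' i (by simpa using this)).symm
  refine ⟨hdvd, i / k, (i + p - 1) / k + 1 - i / k, ?_, fun t ht => ?_⟩
  · have := Nat.lt_mul_div_succ (i + p - 1) hk
    rw [Nat.mul_sub]
    omega
  obtain ⟨P', rfl⟩ := hdvd
  rw [Nat.mul_div_cancel_left P' hk]
  set s := i / k + t
  have hs : k * s ≤ i + p - 1 :=
    (Nat.mul_le_mul_left k (by omega : s ≤ (i + p - 1) / k)).trans (Nat.mul_div_le _ k)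
  have hs' : k * (i / k) ≤ k * s := Nat.mul_le_mul_left k (by omega)
  -- a position of the run inside the block of `s`
  obtain ⟨n, hin, hni, hsn, hns⟩ :
      ∃ n, i ≤ n ∧ n < i + p ∧ k * s ≤ n ∧ n < k * s + k :=
    ⟨max i (k * s), by omega, by omega, by omega, by omega⟩
  have hn := h (n - i) (by omega)
  rw [Nat.add_sub_cancel' hin] at hn
  refine hblock s (s + P') (n - k * s) (by omega) ?_
  rwa [Nat.add_sub_cancel' hsn, mul_add, add_right_comm, Nat.add_sub_cancel' hsn]

end IsPeriodicRun

namespace IsMirrorRun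

theorem widen_center (h : IsMirrorRun w i p q) {p' : ℕ} (hp : p' ≤ p) :
    IsMirrorRun w i p' (q + 2 * (p - p')) := by
  intro t ht
  rw [h t (by omega)]
  congr 1
  omega

theorem trim_ends (h : IsMirrorRun w i p q) {p' : ℕ} (hp : p' ≤ p) :
    IsMirrorRun w (i + (p - p')) p' q := by
  intro t ht
  rw [add_assoc, h _ (by omega)]
  congr 1
  omega

theorem map {w' : ℕ → β} {i' : ℕ} (g : α → β)
    (hw : ∀ j < 2 * p + q, g (w (i + j)) = w' (i' + j)) (h : IsMirrorRun w i p q) :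
    IsMirrorRun w' i' p q := by
  intro t ht
  have e : i' + 2 * p + q - 1 - t = i' + (2 * p + q - 1 - t) := by omega
  have e' : i + 2 * p + q - 1 - t = i + (2 * p + q - 1 - t) := by omega
  rw [← hw t (by omega), h t ht, e, e', hw _ (by omega)]

end IsMirrorRun

theorem three_mul_lt_of_seven_fourths_lt {p q : ℕ} {r : ℚ} (hp : 0 < p) (hr : 7 / 4 < r)
    (h : ((p + q + p : ℕ) : ℚ) = r * (p + q)) : 3 * q < p := by
  have hpq : (0 : ℚ) < p + q := by positivity
  push_cast at h
  have : (7 : ℚ) * (p + q) < 4 * (p + q + p) := by rw [h]; nlinarith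
  exact_mod_cast (by linarith : (3 * q : ℚ) < p)

theorem undirectedPlusFree_seven_fourths_of_no_runs
    (hper : ∀ i p P, 0 < P → 3 * P < 4 * p → ¬ IsPeriodicRun w i p P)
    (hmir : ∀ i p q, 3 * q < p → ¬ IsMirrorRun w i p q) :
    UndirectedPlusFree (7 / 4 : ℝ) w := by
  rintro z ⟨i, hz⟩ r - - hr ⟨x, y, x', rfl, hx, hx', hlen⟩
  have hx'len : x'.length = x.length := by rcases hx' with rfl | rfl <;> simp
  have hq : 3 * y.length < x.length := by
    refine three_mul_lt_of_seven_fourths_lt (List.length_pos_iff.2 hx) ?_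
      (by rw [← hlen]; simp [hx'len, add_assoc])
    have : ((7 / 4 : ℚ) : ℝ) < r := by push_cast; exact hr
    exact_mod_cast this
  have hz' : ∀ j < x.length + y.length + x.length, (x ++ y ++ x')[j]? = some (w (i + j)) := by
    intro j hj
    have : j < (x ++ y ++ x').length := by
      simp only [List.length_append, hx'len]
      omega
    rw [hz, List.getElem?_map, List.getElem?_range this]
    rfl
  have hxt : ∀ t < x.length, x[t]? = some (w (i + t)) := fun t ht => by
    rw [← hz' t (by omega), List.append_assoc, List.getElem?_append_left ht]
  have hx't : ∀ t < x.length, x'[t]? = some (w (i + (x.length + y.length + t))) := fun t ht => by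
    rw [← hz' _ (by omega), List.getElem?_append_right (by simp), List.length_append]
    congr 1; omega
  rcases hx' with h | h <;> rw [h] at hx't
  · refine hper i x.length (x.length + y.length) (by omega) (by omega) fun t ht => ?_
    rw [← Option.some_inj, ← hxt t ht, hx't t ht]
    congr 2; omega
  · refine hmir i x.length y.length hq fun t ht => ?_
    have e := List.getElem?_reverse (l := x) (i := x.length - 1 - t) (by omega)
    rw [hx't _ (by omega), show x.length - 1 - (x.length - 1 - t) = t by omega, hxt t ht,
      Option.some_inj] at e
    rw [← e]
    congr 1; omega

end Runs

theorem List.getD_flatMap_mul_add {α β : Type*} {φ : α → List β} {k : ℕ}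
    (hφ : ∀ a, (φ a).length = k) {v : List α} {d j : ℕ} (hd : d < v.length) (hj : j < k)
    (x : β) (y : α) : (v.flatMap φ).getD (k * d + j) x = (φ (v.getD d y)).getD j x := by
  induction v generalizing d with
  | nil => simp at hd
  | cons a v ih =>
    cases d with
    | zero => simp [List.getD_eq_getElem?_getD, List.getElem?_append_left, hφ, hj]
    | succ d =>
      rw [List.flatMap_cons, List.getD_eq_getElem?_getD,
        List.getElem?_append_right (by rw [hφ, mul_add]; omega), ← List.getD_eq_getElem?_getD,
        hφ, show k * (d + 1) + j - k = k * d + j by rw [mul_add]; omega]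
      exact ih (by simpa using hd)

theorem Nat.ofDigits_div_pow_mod {b : ℕ} {L : List ℕ} (hL : ∀ x ∈ L, x < b) (n : ℕ) :
    Nat.ofDigits b L / b ^ n % b = L.getD n 0 := by
  obtain rfl | hne := eq_or_ne L []
  · simp [Nat.ofDigits]
  have hb : 0 < b := (Nat.zero_le _).trans_lt (hL _ (L.head_mem hne))
  rw [Nat.ofDigits_div_pow_eq_ofDigits_drop n hb L hL, Nat.ofDigits_mod_eq_head!,
    List.head!_eq_head?_getD, List.head?_drop, List.getD_eq_getElem?_getD]
  rcases Nat.lt_or_ge n L.length with hn | hn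
  · simp [hn, Nat.mod_eq_of_lt (hL _ (L.getElem_mem hn))]
  · simp [hn]

theorem fMorph_length (a : Fin 3) : (fMorph a).length = 24 := by
  fin_cases a <;> rfl

theorem fMorph_getD_zero (a : Fin 3) : (fMorph a).getD 0 0 = a := by
  fin_cases a <;> rfl

theorem fMorph_getD_last (a : Fin 3) : (fMorph a).getD 23 0 = a := by
  fin_cases a <;> rfl

theorem fMorph_getD_ne_getD_succ :
    ∀ a : Fin 3, ∀ j < 23, (fMorph a).getD j 0 ≠ (fMorph a).getD (j + 1) 0 := by
  decide

theorem fMorph_getD_injective {j : ℕ} (hj : j < 24) :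
    Function.Injective fun a => (fMorph a).getD j 0 := by
  have : ∀ j < 24, ∀ a b : Fin 3, (fMorph a).getD j 0 = (fMorph b).getD j 0 → a = b := by
    decide
  exact this j hj

theorem fOmega_mul_add (m : ℕ) {j : ℕ} (hj : j < 24) :
    fOmega (24 * m + j) = (fMorph (fOmega m)).getD j 0 := by
  rcases Nat.eq_zero_or_pos (24 * m + j) with h | h
  · obtain ⟨rfl, rfl⟩ : m = 0 ∧ j = 0 := by omega
    rw [fOmega.eq_1]
    rfl
  · obtain ⟨n, hn⟩ := Nat.exists_eq_add_of_lt h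
    rw [hn, fOmega.eq_2]
    congr <;> omega

theorem fOmega_eq_of_mul_add_eq {m m' j : ℕ} (hj : j < 24)
    (h : fOmega (24 * m + j) = fOmega (24 * m' + j)) : fOmega m = fOmega m' := by
  rw [fOmega_mul_add m hj, fOmega_mul_add m' hj] at h
  exact fMorph_getD_injective hj h

theorem fOmega_succ_ne (n : ℕ) : fOmega n ≠ fOmega (n + 1) := by
  induction n using Nat.strong_induction_on with
  | _ n ih =>
  obtain ⟨m, j, hj, rfl⟩ : ∃ m j, j < 24 ∧ n = 24 * m + j :=
    ⟨n / 24, n % 24, Nat.mod_lt _ (by norm_num), (Nat.div_add_mod n 24).symm⟩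
  rcases Nat.lt_or_ge j 23 with hj' | hj'
  · rw [fOmega_mul_add m hj, add_assoc, fOmega_mul_add m (by omega)]
    exact fMorph_getD_ne_getD_succ _ j hj'
  · obtain rfl : j = 23 := by omega
    rw [fOmega_mul_add m hj, fMorph_getD_last, show 24 * m + 23 + 1 = 24 * (m + 1) + 0 by ring,
      fOmega_mul_add _ (by norm_num), fMorph_getD_zero]
    exact ih m (by omega)

theorem fOmega_add_eq_getD_flatMap (n : ℕ) {v : List (Fin 3)}
    (hv : ∀ d < v.length, v.getD d 0 = fOmega (n / 24 + d)) {j : ℕ}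
    (hj : n % 24 + j < 24 * v.length) :
    fOmega (n + j) = (v.flatMap fMorph).getD (n % 24 + j) 0 := by
  obtain ⟨d, e, he, hde⟩ : ∃ d e, e < 24 ∧ n % 24 + j = 24 * d + e :=
    ⟨_, _, Nat.mod_lt _ (by norm_num), (Nat.div_add_mod (n % 24 + j) 24).symm⟩
  have hd : d < v.length := by omega
  rw [hde, List.getD_flatMap_mul_add fMorph_length hd he 0 0, hv d hd, ← fOmega_mul_add _ he]
  congr 1
  omega

theorem fOmega_add_eq_getD_pair (n : ℕ) {j : ℕ} (hj : n % 24 + j < 48) :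
    fOmega (n + j) =
      (fMorph (fOmega (n / 24)) ++ fMorph (fOmega (n / 24 + 1))).getD (n % 24 + j) 0 := by
  rw [fOmega_add_eq_getD_flatMap n (v := [fOmega (n / 24), fOmega (n / 24 + 1)]) (fun d hd => ?_)
    (by simpa using hj)]
  · simp
  · simp only [List.length_cons, List.length_nil] at hd
    interval_cases d <;> rfl

theorem fOmega_add_eq_getD_triple (n : ℕ) {j : ℕ} (hj : n % 24 + j < 72) :
    fOmega (n + j) = ([fOmega (n / 24), fOmega (n / 24 + 1), fOmega (n / 24 + 1 + 1)].flatMap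
      fMorph).getD (n % 24 + j) 0 := by
  refine fOmega_add_eq_getD_flatMap n (fun d hd => ?_) (by simpa using hj)
  simp only [List.length_cons, List.length_nil] at hd
  interval_cases d <;> rfl

/-- Contains every factor of length `L ≤ 24` of `f^ω(0)`, paired with its offset in its block. -/
def blockWindows (L : ℕ) : List (List (Fin 3) × ℕ) :=
  ((List.finRange 3 ×ˢ List.finRange 3).filter fun ab => ab.1 ≠ ab.2).flatMap fun ab =>
    (List.range 24).map fun t => (((fMorph ab.1 ++ fMorph ab.2).drop t).take L, t)

theorem fOmega_window_mem_blockWindows (n : ℕ) {L : ℕ} (hL : L ≤ 24) :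
    ((List.range L).map fun j => fOmega (n + j), n % 24) ∈ blockWindows L := by
  simp only [blockWindows, List.mem_flatMap, List.mem_filter, List.mem_map, List.mem_range,
    Prod.mk.injEq]
  refine ⟨(fOmega (n / 24), fOmega (n / 24 + 1)),
    ⟨List.mem_product.2 ⟨List.mem_finRange _, List.mem_finRange _⟩,
      by simpa using fOmega_succ_ne _⟩,
    n % 24, Nat.mod_lt _ (by norm_num), ?_, rfl⟩
  have h24 := Nat.mod_lt n (by norm_num : 24 > 0)
  apply List.ext_getElem
  · simp only [List.length_take, List.length_drop, List.length_append, fMorph_length,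
      List.length_map, List.length_range]
    omega
  · intro j h1 h2
    simp only [List.length_map, List.length_range] at h2
    simp only [List.getElem_take, List.getElem_drop, List.getElem_map, List.getElem_range]
    rw [fOmega_add_eq_getD_pair n (by omega), List.getD_eq_getElem]

theorem blockWindows_sixteen_lookup :
    ∀ x ∈ blockWindows 16, (blockWindows 16).lookup x.1 = some x.2 := by
  decide +kernel

theorem blockWindows_nineteen_lookup_reverse :
    ∀ x ∈ blockWindows 19, (blockWindows 19).lookup x.1.reverse = none := by
  decide +kernel

theorem fOmega_modEq_of_window_eq {n n' : ℕ} (h : ∀ j < 16, fOmega (n + j) = fOmega (n' + j)) :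
    n ≡ n' [MOD 24] := by
  have hn := fOmega_window_mem_blockWindows n (L := 16) (by norm_num)
  have hn' := fOmega_window_mem_blockWindows n' (L := 16) (by norm_num)
  rw [List.map_congr_left fun j hj => h j (List.mem_range.1 hj)] at hn
  exact Option.some_injective _
    ((blockWindows_sixteen_lookup _ hn).symm.trans (blockWindows_sixteen_lookup _ hn'))

theorem fOmega_not_isMirrorRun_nineteen (i q : ℕ) : ¬ IsMirrorRun fOmega i 19 q := by
  intro h
  have hrev : ((List.range 19).map fun j => fOmega (i + j)).reverse =
      (List.range 19).map fun j => fOmega (i + 19 + q + j) := by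
    apply List.ext_getElem (by simp)
    intro j h1 h2
    simp only [List.getElem_reverse, List.getElem_map, List.getElem_range, List.length_map,
      List.length_range]
    simp only [List.length_map, List.length_range] at h2
    rw [h _ (by omega)]
    congr 1
    omega
  have := blockWindows_nineteen_lookup_reverse _
    (fOmega_window_mem_blockWindows i (L := 19) (by norm_num))
  rw [List.lookup_eq_none_iff] at this
  simpa [hrev] using this _ (fOmega_window_mem_blockWindows (i + 19 + q) (L := 19) (by norm_num))

-- Letter `n` of `W`, read off the base-`4` code of `W`: kernel reduction evaluates the code once,
-- after which a letter costs two arithmetic operations instead of a walk along the list.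
def letterVal (W : List (Fin 3)) (n : ℕ) : ℕ :=
  Nat.ofDigits 4 (W.map Fin.val) / 4 ^ n % 4

theorem letterVal_eq (W : List (Fin 3)) (n : ℕ) : letterVal W n = (W.getD n 0 : ℕ) := by
  rw [letterVal, Nat.ofDigits_div_pow_mod fun _ hx => ?_, ← List.getD_map W 0 Fin.val]
  · rfl
  · obtain ⟨a, -, rfl⟩ := List.mem_map.1 hx
    omega

theorem flatMap_fMorph_not_isPeriodicRun : ∀ a b c : Fin 3, a ≠ b → b ≠ c →
    ∀ r ∈ List.range 24, ∀ P ∈ List.range' 1 19,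
      ¬ IsPeriodicRun (letterVal ([a, b, c].flatMap fMorph)) r (3 * P / 4 + 1) P := by
  decide +kernel

theorem flatMap_fMorph_not_isMirrorRun : ∀ a b c : Fin 3, a ≠ b → b ≠ c →
    ∀ r ∈ List.range 24, ∀ q ∈ List.range 6,
      ¬ IsMirrorRun (letterVal ([a, b, c].flatMap fMorph)) r (3 * q + 1) q := by
  decide +kernel

theorem fOmega_not_isPeriodicRun_short {i P : ℕ} (hP : 0 < P) (hP' : P < 20) :
    ¬ IsPeriodicRun fOmega i (3 * P / 4 + 1) P := fun h =>
  flatMap_fMorph_not_isPeriodicRun _ _ _ (fOmega_succ_ne _) (fOmega_succ_ne _) (i % 24)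
    (List.mem_range.2 (Nat.mod_lt _ (by norm_num))) P (List.mem_range'_1.2 ⟨hP, by omega⟩) <|
    h.map Fin.val fun j hj => by rw [letterVal_eq, fOmega_add_eq_getD_triple i (by omega)]

theorem fOmega_not_isMirrorRun_short {i q : ℕ} (hq : q < 6) :
    ¬ IsMirrorRun fOmega i (3 * q + 1) q := fun h =>
  flatMap_fMorph_not_isMirrorRun _ _ _ (fOmega_succ_ne _) (fOmega_succ_ne _) (i % 24)
    (List.mem_range.2 (Nat.mod_lt _ (by norm_num))) q (List.mem_range.2 hq) <|
    h.map Fin.val fun j hj => by rw [letterVal_eq, fOmega_add_eq_getD_triple i (by omega)]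

theorem fOmega_not_isPeriodicRun {i p P : ℕ} (hP : 0 < P) (hpP : 3 * P < 4 * p) :
    ¬ IsPeriodicRun fOmega i p P := by
  induction P using Nat.strong_induction_on generalizing i p with
  | _ P ih =>
  intro h
  by_cases hp : 16 ≤ p
  · obtain ⟨⟨P', rfl⟩, i', p', hpp', h'⟩ := h.desubstitute (by norm_num)
      (fun _ _ => fOmega_modEq_of_window_eq) (fun _ _ _ => fOmega_eq_of_mul_add_eq) hp (by omega)
    rw [Nat.mul_div_cancel_left P' (by norm_num)] at h'
    exact ih P' (by omega) (by omega) (by omega) h'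
  · exact fOmega_not_isPeriodicRun_short hP (by omega) (h.mono (by omega))

theorem fOmega_not_isMirrorRun {i p q : ℕ} (hq : 3 * q < p) : ¬ IsMirrorRun fOmega i p q := by
  intro h
  by_cases hp : 19 ≤ p
  · exact fOmega_not_isMirrorRun_nineteen _ _ (h.widen_center hp)
  · exact fOmega_not_isMirrorRun_short (by omega) (h.trim_ends (by omega : 3 * q + 1 ≤ p))

theorem fOmega_undirected_seven_fourths_plus_free :
    UndirectedPlusFree (7 / 4 : ℝ) fOmega :=
  undirectedPlusFree_seven_fourths_of_no_runs (fun _ _ _ => fOmega_not_isPeriodicRun)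
    (fun _ _ _ => fOmega_not_isMirrorRun)
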